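/- Let R be a commutative Noetherian ring. Let Y be a bounded above chain complex of R-modules all of whose components are Gorenstein cotorsion. Then Ext^1(F, Y) = 0 for every F-totally acyclic complex of flats F, where Ext^1 is computed in the abelian category Ch(R) of chain complexes of R-modules. -/

import Mathlib

/-!
STATEMENT 9: Let `R` be a commutative Noetherian ring and `Y` a bounded above chain complex
of `R`-modules all of whose components are Gorenstein cotorsion.  Then `Ext¹(F, Y) = 0` in
`Ch(R)` for every F-totally acyclic complex of flats `F`.

The vanishing of the (Yoneda) group `Ext¹(A, B)` is expressed by the (equivalent)
statement that every short exact sequence `0 → B → E → A → 0` splits.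
-/

universe u

open CategoryTheory MonoidalCategory Limits

/-- Vanishing of (Yoneda) `Ext¹(A, B)` in an abelian category: every short exact
sequence `0 → B → E → A → 0` splits. -/
def Ext1Vanishes {C : Type*} [Category C] [Abelian C] (A B : C) : Prop :=
  ∀ (E : C) (f : B ⟶ E) (g : E ⟶ A) (w : f ≫ g = 0),
    (ShortComplex.mk f g w).ShortExact → ∃ s : A ⟶ E, s ≫ g = 𝟙 A

variable {R : Type u} [CommRing R]

/-- An `R`-module `M` is cotorsion if `Ext¹_R(F, M) = 0` for every flat `R`-module `F`. -/
def IsCotorsionModule (M : ModuleCat.{u} R) : Prop :=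
  ∀ F : ModuleCat.{u} R, Module.Flat R F → Ext1Vanishes F M

/-- A chain complex `F` of `R`-modules is an F-totally acyclic complex of flats if all its
components are flat, it is acyclic, and `I ⊗[R] F` is acyclic for every injective
`R`-module `I`. -/
def FTotallyAcyclic (F : ChainComplex (ModuleCat.{u} R) ℤ) : Prop :=
  (∀ n, Module.Flat R (F.X n)) ∧ (∀ n, F.ExactAt n) ∧
    ∀ I : ModuleCat.{u} R, Module.Injective R I →
      ∀ n, (((tensorLeft I).mapHomologicalComplex (ComplexShape.down ℤ)).obj F).ExactAt n

/-- An `R`-module is Gorenstein flat if it is isomorphic to `Z₀ F` for some F-totally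
acyclic complex of flats `F`. -/
def IsGorensteinFlat (G : ModuleCat.{u} R) : Prop :=
  ∃ F : ChainComplex (ModuleCat.{u} R) ℤ, FTotallyAcyclic F ∧ Nonempty (G ≅ F.cycles 0)

/-- An `R`-module `L` is Gorenstein cotorsion if `Ext¹_R(G, L) = 0` for every Gorenstein
flat `R`-module `G`. -/
def IsGorensteinCotorsion (L : ModuleCat.{u} R) : Prop :=
  ∀ G : ModuleCat.{u} R, IsGorensteinFlat G → Ext1Vanishes G L

/-!
Split `0 → Y → E → F → 0` in each degree (flat modules are Gorenstein flat) and correct these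
splittings by downward induction, starting above the degrees where `Y` vanishes and `E → F` is an
isomorphism. Given a splitting `t₀` in degree `n` and a splitting `t` in degree `n + 1` that
commutes with the differentials, the defect `t ≫ d - d ≫ t₀ : F_{n+1} → E_n` lands in `Y_n` and
kills the boundaries, i.e. the cycles, of `F_{n+1}`; as `F` is exact, it factors through `Z_n F`.
The cycles of `F` are Gorenstein flat (they are the `Z_0` of shifts of `F`), so
`Ext¹(F_n / Z_n F, Y_n) = Ext¹(Z_{n-1} F, Y_n) = 0` and the factored defect extends to `F_n`;
adding the extension to `t₀` gives the next splitting.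
-/

universe v

theorem Int.exists_forall_of_downward_step {X : ℤ → Type*} (r : ∀ n, X (n + 1) → X n → Prop)
    (N : ℤ) (s₀ : ∀ n, X n) (hs₀ : ∀ n ≥ N, r n (s₀ (n + 1)) (s₀ n))
    (step : ∀ n (s : ∀ m, X m), (∀ m ≥ n + 1, r m (s (m + 1)) (s m)) → ∃ y, r n (s (n + 1)) y) :
    ∃ s : ∀ n, X n, ∀ n, r n (s (n + 1)) (s n) := by
  have extend : ∀ (k : ℕ) (s : ∀ n, X n), (∀ n ≥ N - k, r n (s (n + 1)) (s n)) →
      ∃ s' : ∀ n, X n, (∀ n ≥ N - (k + 1), r n (s' (n + 1)) (s' n)) ∧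
        ∀ n ≥ N - k, s' n = s n := by
    intro k s hs
    obtain ⟨y, hy⟩ := step (N - (k + 1)) s (fun m hm => hs m (by omega))
    refine ⟨Function.update s (N - (k + 1)) y, fun n hn => ?_,
      fun n hn => Function.update_of_ne (by omega) _ _⟩
    rw [Function.update_of_ne (by omega : n + 1 ≠ _)]
    rcases hn.lt_or_eq with hn | rfl
    · rw [Function.update_of_ne (by omega)]
      exact hs n (by omega)
    · rwa [Function.update_self]
  choose next hnext hnext_eq using extend
  let seq : ∀ k : ℕ, {s : ∀ n, X n // ∀ n ≥ N - k, r n (s (n + 1)) (s n)} := fun k =>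
    Nat.rec ⟨s₀, fun n hn => hs₀ n (by simpa using hn)⟩
      (fun k s => ⟨next k s.1 s.2, hnext k s.1 s.2⟩) k
  have stable : ∀ k j : ℕ, k ≤ j → ∀ n ≥ N - k, (seq j).1 n = (seq k).1 n := by
    intro k j hkj
    induction j, hkj using Nat.le_induction with
    | base => exact fun _ _ => rfl
    | succ j hkj ih => exact fun n hn => (hnext_eq j _ _ n (by omega)).trans (ih n hn)
  -- degree `n` no longer changes after stage `(N - n).toNat`
  refine ⟨fun n => (seq (N - n).toNat).1 n, fun n => ?_⟩
  have h := (seq (N - n).toNat).2 n (by omega)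
  rwa [stable (N - (n + 1)).toNat (N - n).toNat (by omega) (n + 1) (by omega)] at h

section

variable {C : Type*} [Category.{v} C] [Abelian C]

theorem Ext1Vanishes.exists_f_comp_eq {S : ShortComplex C} (hS : S.ShortExact) {L : C}
    (h : Ext1Vanishes S.X₃ L) (v : S.X₁ ⟶ L) : ∃ w : S.X₂ ⟶ L, S.f ≫ w = v := by
  have := hS.mono_f
  have := hS.epi_g
  -- the pushout of `S` along `v` is an extension of `S.X₃` by `L`, whose splitting extends `v`
  let π : pushout S.f v ⟶ S.X₃ := pushout.desc S.g 0 (by simp)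
  have hπ : pushout.inl S.f v ≫ π = S.g := pushout.inl_desc _ _ _
  have : Epi π := epi_of_epi_fac hπ
  have hexact : (ShortComplex.mk (pushout.inr S.f v) π (pushout.inr_desc _ _ _)).Exact := by
    refine ShortComplex.exact_of_g_is_cokernel _ <| CokernelCofork.IsColimit.ofπ _ _
      (fun k hk => hS.exact.desc (pushout.inl S.f v ≫ k) ?_)
      (fun k hk => ?_) (fun k hk m hm => ?_)
    · rw [pushout.condition_assoc, hk, comp_zero]
    · apply pushout.hom_ext
      · rw [reassoc_of% hπ, hS.exact.g_desc]
      · rw [pushout.inr_desc_assoc, zero_comp, hk]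
    · rw [← cancel_epi S.g, hS.exact.g_desc, ← hπ, Category.assoc, hm]
  obtain ⟨s, hs⟩ := h _ _ _ _ (ShortComplex.ShortExact.mk' hexact inferInstance inferInstance)
  let σ := ShortComplex.Splitting.ofExactOfSection _ hexact s hs inferInstance
  exact ⟨pushout.inl S.f v ≫ σ.r, by rw [pushout.condition_assoc, σ.f_r, Category.comp_id]⟩

end

namespace HomologicalComplex

variable {C : Type*} [Category.{v} C] [Abelian C] (K : ChainComplex C ℤ)

lemma epi_toCycles_of_exactAt {i j : ℤ} (hij : j + 1 = i) (hK : K.ExactAt j) :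
    Epi (K.toCycles i j) := by
  rw [K.exactAt_iff' i j (j - 1) (by simp [hij]) (by simp),
    ShortComplex.exact_iff_epi_toCycles,
    ← K.toCycles_cyclesIsoSc'_hom i j (j - 1) (by simp [hij]) (by simp)] at hK
  exact (epi_comp_iff_of_isIso _ _).1 hK

lemma exact_d_toCycles {i j k : ℤ} (hij : j + 1 = i) (hjk : k + 1 = j) (hK : K.ExactAt j) :
    (ShortComplex.mk (K.d i j) (K.toCycles j k) (K.d_toCycles i j k)).Exact := by
  rw [K.exactAt_iff' i j k (by simp [hij]) (by simp; omega)] at hK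
  exact (ShortComplex.exact_iff_of_epi_of_isIso_of_mono
    ({ τ₁ := 𝟙 _, τ₂ := 𝟙 _, τ₃ := K.iCycles k } :
      ShortComplex.mk _ _ (K.d_toCycles i j k) ⟶ ShortComplex.mk _ _ (K.d_comp_d i j k))).2 hK

lemma shortExact_iCycles_toCycles {j k : ℤ} (hjk : k + 1 = j) (hK : K.ExactAt k) :
    (ShortComplex.mk (K.iCycles j) (K.toCycles j k)
      (by simp [← cancel_mono (K.iCycles k)])).ShortExact := by
  have := K.epi_toCycles_of_exactAt hjk hK
  refine ShortComplex.ShortExact.mk' ?_ inferInstance inferInstance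
  exact (ShortComplex.exact_iff_of_epi_of_isIso_of_mono
    ({ τ₁ := 𝟙 _, τ₂ := 𝟙 _, τ₃ := K.iCycles k } :
      ShortComplex.mk (K.iCycles j) (K.toCycles j k) _ ⟶ ShortComplex.mk _ _ (K.iCycles_d j k))).2
    (ShortComplex.exact_of_f_is_kernel _ (K.cyclesIsKernel j k (by simp; omega)))

end HomologicalComplex

/-- `embeddingDown'Add 1 t` as an embedding of `down ℤ`: instance search finds its `IsRelIff`
instance under this name, but not through the unfolding of `down ℤ` to `down' 1`. -/
abbrev ComplexShape.embeddingDownIntAdd (t : ℤ) :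
    (ComplexShape.down ℤ).Embedding (ComplexShape.down ℤ) :=
  ComplexShape.embeddingDown'Add 1 t

instance (t : ℤ) : (ComplexShape.embeddingDownIntAdd t).IsRelIff :=
  ComplexShape.instIsRelIffEmbeddingDown'Add 1 t

namespace ChainComplex

open HomologicalComplex

variable {C : Type*} [Category.{v} C] [Abelian C]

lemma exactAt_of_isIso_d_one_zero (K : ChainComplex C ℤ) [IsIso (K.d 1 0)]
    (hK : ∀ n, n ≠ 0 → n ≠ 1 → IsZero (K.X n)) (n : ℤ) : K.ExactAt n := by
  by_cases h₁ : n = 1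
  · subst h₁
    rw [K.exactAt_iff' 2 1 0 (by simp) (by simp), ShortComplex.exact_iff_mono _
      ((hK 2 (by omega) (by omega)).eq_of_src _ _)]
    exact inferInstanceAs (Mono (K.d 1 0))
  by_cases h₀ : n = 0
  · subst h₀
    rw [K.exactAt_iff' 1 0 (-1) (by simp) (by simp), ShortComplex.exact_iff_epi _
      ((hK (-1) (by omega) (by omega)).eq_of_tgt _ _)]
    exact inferInstanceAs (Epi (K.d 1 0))
  exact ExactAt.of_isZero (hK n h₀ h₁)

lemma exactAt_restriction_iff (K : ChainComplex C ℤ) (t n : ℤ) :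
    (K.restriction (ComplexShape.embeddingDownIntAdd t)).ExactAt n ↔ K.ExactAt (n + t) := by
  rw [exactAt_iff' _ (n + 1) n (n - 1) (by simp) (by simp),
    K.exactAt_iff' (n + 1 + t) (n + t) (n - 1 + t) (by simp; ring) (by simp; ring)]
  exact ShortComplex.exact_iff_of_iso (restriction.sc'Iso K _ _ _ _ rfl rfl rfl
    (by simp; ring) (by simp; ring))

end ChainComplex

namespace CategoryTheory.ShortComplex.ShortExact

variable {C : Type*} [Category.{v} C] [Abelian C] {S : ShortComplex (ChainComplex C ℤ)}

lemma degreewise (hS : S.ShortExact) (n : ℤ) :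
    (ShortComplex.mk (S.f.f n) (S.g.f n) (by rw [← HomologicalComplex.comp_f, S.zero,
      HomologicalComplex.zero_f])).ShortExact :=
  hS.map_of_exact (HomologicalComplex.eval C _ n)

lemma exists_section_f_of_section_f_succ (hS : S.ShortExact) (hF : S.X₃.Acyclic) (n : ℤ)
    (h₁ : Ext1Vanishes (S.X₃.X n) (S.X₁.X n))
    (h₂ : Ext1Vanishes (S.X₃.cycles (n - 1)) (S.X₁.X n))
    (t : S.X₃.X (n + 1) ⟶ S.X₂.X (n + 1)) (ht : t ≫ S.g.f (n + 1) = 𝟙 _)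
    (htd : S.X₃.d (n + 1 + 1) (n + 1) ≫ t ≫ S.X₂.d (n + 1) n = 0) :
    ∃ s : S.X₃.X n ⟶ S.X₂.X n,
      s ≫ S.g.f n = 𝟙 _ ∧ S.X₃.d (n + 1) n ≫ s = t ≫ S.X₂.d (n + 1) n := by
  have hSn := hS.degreewise n
  have := hSn.mono_f
  obtain ⟨t₀, ht₀⟩ := h₁ _ _ _ _ hSn
  let e := t ≫ S.X₂.d (n + 1) n - S.X₃.d (n + 1) n ≫ t₀
  have he : e ≫ S.g.f n = 0 := by
    rw [Preadditive.sub_comp, Category.assoc, ← S.g.comm, reassoc_of% ht, Category.assoc, ht₀,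
      Category.comp_id, sub_self]
  let u := hSn.exact.lift e he
  have hu : u ≫ S.f.f n = e := hSn.exact.lift_f e he
  have hdu : S.X₃.d (n + 1 + 1) (n + 1) ≫ u = 0 := by
    rw [← cancel_mono (S.f.f n), Category.assoc, hu, Preadditive.comp_sub, htd,
      HomologicalComplex.d_comp_d_assoc, zero_comp, zero_comp, sub_zero]
  have := S.X₃.epi_toCycles_of_exactAt rfl (hF n)
  have hex := S.X₃.exact_d_toCycles rfl rfl (hF (n + 1))
  obtain ⟨w, hw⟩ := h₂.exists_f_comp_eq
    (S.X₃.shortExact_iCycles_toCycles (by omega) (hF (n - 1))) (hex.desc u hdu)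
  have hdw : S.X₃.d (n + 1) n ≫ w = u := by
    rw [← S.X₃.toCycles_i, Category.assoc]
    exact (congrArg _ hw).trans (hex.g_desc u hdu)
  refine ⟨t₀ + w ≫ S.f.f n, ?_, ?_⟩
  · rw [Preadditive.add_comp, ht₀, Category.assoc, ← HomologicalComplex.comp_f, S.zero,
      HomologicalComplex.zero_f, comp_zero, add_zero]
  · rw [Preadditive.comp_add, reassoc_of% hdw, hu, add_sub_cancel]

theorem exists_section_of_bddAbove (hS : S.ShortExact) (hF : S.X₃.Acyclic) (N : ℤ)
    (hN : ∀ n > N, IsZero (S.X₁.X n)) (h₁ : ∀ n, Ext1Vanishes (S.X₃.X n) (S.X₁.X n))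
    (h₂ : ∀ n, Ext1Vanishes (S.X₃.cycles (n - 1)) (S.X₁.X n)) :
    ∃ s : S.X₃ ⟶ S.X₂, s ≫ S.g = 𝟙 _ := by
  choose sec hsec using fun n => h₁ n _ _ _ _ (hS.degreewise n)
  have hmono (n : ℤ) (hn : n > N) : Mono (S.g.f n) :=
    (hS.degreewise n).exact.mono_g ((hN n hn).eq_of_src _ _)
  obtain ⟨s, hs⟩ := Int.exists_forall_of_downward_step
    (fun n (x : S.X₃.X (n + 1) ⟶ S.X₂.X (n + 1)) (y : S.X₃.X n ⟶ S.X₂.X n) =>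
      y ≫ S.g.f n = 𝟙 _ ∧ S.X₃.d (n + 1) n ≫ y = x ≫ S.X₂.d (n + 1) n)
    (N + 1) sec
    (fun n hn => ⟨hsec n, by
      have := hmono n (by omega)
      rw [← cancel_mono (S.g.f n), Category.assoc, hsec, Category.assoc, ← S.g.comm,
        reassoc_of% hsec, Category.comp_id]⟩)
    (fun n s hs => hS.exists_section_f_of_section_f_succ hF n (h₁ n) (h₂ n) (s (n + 1))
      (hs (n + 1) le_rfl).1
      (by rw [reassoc_of% (hs (n + 1) le_rfl).2, HomologicalComplex.d_comp_d, comp_zero]))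
  refine ⟨{ f := s, comm' := ?_ }, ?_⟩
  · rintro _ n rfl
    exact (hs n).2.symm
  · ext n
    exact (hs n).1

end CategoryTheory.ShortComplex.ShortExact

open HomologicalComplex

lemma FTotallyAcyclic.restriction {F : ChainComplex (ModuleCat.{u} R) ℤ} (hF : FTotallyAcyclic F)
    (t : ℤ) : FTotallyAcyclic (F.restriction (ComplexShape.embeddingDownIntAdd t)) :=
  ⟨fun n => hF.1 (n + t), fun n => (F.exactAt_restriction_iff t n).2 (hF.2.1 (n + t)),
    -- tensoring with `I` commutes with restriction up to definitional equality
    fun I hI n => (ChainComplex.exactAt_restriction_iff _ t n).2 (hF.2.2 I hI (n + t))⟩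

lemma FTotallyAcyclic.isGorensteinFlat_cycles {F : ChainComplex (ModuleCat.{u} R) ℤ}
    (hF : FTotallyAcyclic F) (n : ℤ) : IsGorensteinFlat (F.cycles n) :=
  ⟨_, hF.restriction n,
    ⟨(F.restrictionCyclesIso _ 0 (-1) (by simp) (by simp) rfl (by simp; ring)).symm⟩⟩

lemma isGorensteinFlat_of_flat (M : ModuleCat.{u} R) [Module.Flat R M] : IsGorensteinFlat M := by
  let K := double (𝟙 M) (ComplexShape.down_mk (α := ℤ) 1 0 (by simp))
  have hK : ∀ n, n ≠ 0 → n ≠ 1 → IsZero (K.X n) := fun n h₀ h₁ => isZero_double_X _ _ n h₁ h₀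
  have : IsIso (K.d 1 0) := by
    rw [double_d _ _ (by simp)]
    infer_instance
  refine ⟨K, ⟨fun n => ?_, ChainComplex.exactAt_of_isIso_d_one_zero K hK, fun I _ => ?_⟩, ⟨?_⟩⟩
  · by_cases h₁ : n = 1
    · subst h₁
      exact Module.Flat.of_linearEquiv (doubleXIso₀ _ _).toLinearEquiv
    by_cases h₀ : n = 0
    · subst h₀
      exact Module.Flat.of_linearEquiv (doubleXIso₁ _ _ (by simp)).toLinearEquiv
    have := ModuleCat.subsingleton_of_isZero (hK n h₀ h₁)
    infer_instance
  · have : IsIso ((((tensorLeft I).mapHomologicalComplex _).obj K).d 1 0) :=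
      inferInstanceAs (IsIso ((tensorLeft I).map (K.d 1 0)))
    exact ChainComplex.exactAt_of_isIso_d_one_zero _
      (fun n h₀ h₁ => (tensorLeft I).map_isZero (hK n h₀ h₁))
  · exact (doubleXIso₁ _ _ (by simp)).symm ≪≫
      (K.iCyclesIso 0 (-1) (by simp) (double_d_eq_zero₀ _ _ _ _ (by simp))).symm

theorem ext1_vanishes_of_bddAbove_gorensteinCotorsion_components_general
    (Y : ChainComplex (ModuleCat.{u} R) ℤ)
    (hbdd : ∃ N : ℤ, ∀ n > N, IsZero (Y.X n))
    (hcomp : ∀ n, IsGorensteinCotorsion (Y.X n))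
    (F : ChainComplex (ModuleCat.{u} R) ℤ) (hF : FTotallyAcyclic F) :
    Ext1Vanishes F Y := by
  obtain ⟨N, hN⟩ := hbdd
  intro E f g w hS
  have (n : ℤ) : Module.Flat R (F.X n) := hF.1 n
  exact hS.exists_section_of_bddAbove hF.2.1 N hN
    (fun n => hcomp n _ (isGorensteinFlat_of_flat _))
    (fun n => hcomp n _ (hF.isGorensteinFlat_cycles (n - 1)))

theorem ext1_vanishes_of_bddAbove_gorensteinCotorsion_components
    [IsNoetherianRing R]
    (Y : ChainComplex (ModuleCat.{u} R) ℤ)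
    (hbdd : ∃ N : ℤ, ∀ n > N, IsZero (Y.X n))
    (hcomp : ∀ n, IsGorensteinCotorsion (Y.X n))
    (F : ChainComplex (ModuleCat.{u} R) ℤ) (hF : FTotallyAcyclic F) :
    Ext1Vanishes F Y :=
  ext1_vanishes_of_bddAbove_gorensteinCotorsion_components_general Y hbdd hcomp F hF
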